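/- arXiv:2109.05420 — 2 statements merged into one kernel-verified Lean document; each statement's English description precedes it below -/
import Mathlib

section
/- Let $\bar x_* = \lambda_1 \in (0,1)$, $\bar y_* = (1-\bar x_*)(a_1 + \bar x_*)$ with $a_1 > 0$, and consider the $2\times 2$ matrix $A = \begin{pmatrix} -\bar x_* + \frac{\bar x_* \bar y_*}{(a_1+\bar x_*)^2} & -\frac{\bar x_*}{a_1+\bar x_*} \\ \frac{a_1 m_1 \bar y_*}{(a_1+\bar x_*)^2} & 0 \end{pmatrix}$ with $m_1 > 0$. Then both eigenvalues of $A$ have negative real part if and only if $\lambda_1 > \frac{1-a_1}{2}$. -/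
open Polynomial in
lemma charpoly_fin_two' (p q r s : ℂ) :
    Matrix.charpoly !![p, q; r, s] = X ^ 2 - C (p + s) * X + C (p * s - q * r) := by
  rw [Matrix.charpoly, Matrix.det_fin_two]
  rw [Matrix.charmatrix_apply_eq, Matrix.charmatrix_apply_eq,
    Matrix.charmatrix_apply_ne _ _ _ (by decide), Matrix.charmatrix_apply_ne _ _ _ (by decide)]
  simp only [show (!![p,q;r,s] 0 0) = p from rfl, show (!![p,q;r,s] 0 1) = q from rfl,
    show (!![p,q;r,s] 1 0) = r from rfl, show (!![p,q;r,s] 1 1) = s from rfl,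
    Polynomial.C_add, Polynomial.C_mul, Polynomial.C_sub]
  ring

theorem stmt_11 (a1 m1 l1 : ℝ) (ha1 : 0 < a1) (hm1 : 0 < m1)
    (hl1 : 0 < l1) (hl1' : l1 < 1)
    (x y : ℝ) (hx : x = l1) (hy : y = (1 - x) * (a1 + x))
    (A : Matrix (Fin 2) (Fin 2) ℝ)
    (hA : A = !![-x + x * y / (a1 + x) ^ 2, -(x / (a1 + x));
                 a1 * m1 * y / (a1 + x) ^ 2, 0]) :
    (∀ μ : ℂ, (Matrix.charpoly (A.map (algebraMap ℝ ℂ))).IsRoot μ → μ.re < 0) ↔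
      (1 - a1) / 2 < l1 := by
  subst hx hy hA
  have hax : (0:ℝ) < a1 + x := by linarith
  have h1 : (0:ℝ) < 1 - x := by linarith
  set T : ℝ := -x + x * ((1 - x) * (a1 + x)) / (a1 + x) ^ 2 with hT
  set b : ℝ := -(x / (a1 + x)) with hb
  set c : ℝ := a1 * m1 * ((1 - x) * (a1 + x)) / (a1 + x) ^ 2 with hc
  set D : ℝ := -(b * c) with hD
  have hD0 : 0 < D := by
    have hpos : (0:ℝ) < x / (a1 + x) * (a1 * m1 * ((1 - x) * (a1 + x)) / (a1 + x) ^ 2) := by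
      apply mul_pos (div_pos hl1 hax)
      apply div_pos (by positivity) (by positivity)
    rw [hD, hb, hc]
    nlinarith [hpos]
  -- root characterization
  have hroot : ∀ μ : ℂ,
      (Matrix.charpoly ((!![T, b; c, 0]).map (algebraMap ℝ ℂ))).IsRoot μ ↔
        μ ^ 2 - (T : ℂ) * μ + (D : ℂ) = 0 := by
    intro μ
    have hB : (!![T, b; c, 0]).map (algebraMap ℝ ℂ)
        = !![(T : ℂ), (b : ℂ); (c : ℂ), (0 : ℂ)] := by
      ext i j
      fin_cases i <;> fin_cases j <;> simp [Matrix.map_apply]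
    rw [hB, charpoly_fin_two']
    simp only [Polynomial.IsRoot, Polynomial.eval_add, Polynomial.eval_sub, Polynomial.eval_mul,
      Polynomial.eval_pow, Polynomial.eval_X, Polynomial.eval_C, hD]
    constructor <;> intro h <;> · push_cast at *; linear_combination h
  have hTiff : T < 0 ↔ (1 - a1) / 2 < x := by
    have hT' : T = x * (1 - a1 - 2 * x) / (a1 + x) := by
      rw [hT]; field_simp; ring
    rw [hT', div_neg_iff]
    constructor
    · rintro (⟨h1', h2⟩ | ⟨h1', h2⟩)
      · linarith
      · nlinarith
    · intro h
      exact Or.inr ⟨by nlinarith, hax⟩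
  rw [show (!![-x + x * ((1 - x) * (a1 + x)) / (a1 + x) ^ 2, -(x / (a1 + x));
        a1 * m1 * ((1 - x) * (a1 + x)) / (a1 + x) ^ 2, 0]) = !![T, b; c, 0] by
      rw [hT, hb, hc]]
  rw [← hTiff]
  clear_value T b c D
  constructor
  · intro h
    rcases le_or_gt 0 (T ^ 2 - 4 * D) with hd | hd
    · set s := Real.sqrt (T ^ 2 - 4 * D) with hs
      have hs2 : s ^ 2 = T ^ 2 - 4 * D := Real.sq_sqrt hd
      have hsnn : 0 ≤ s := Real.sqrt_nonneg _
      clear_value s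
      have hr : ((((T + s) / 2 : ℝ)) : ℂ) ^ 2 - (T : ℂ) * (((T + s) / 2 : ℝ) : ℂ) + (D : ℂ) = 0 := by
        have h0 : ((T + s) / 2) ^ 2 - T * ((T + s) / 2) + D = 0 := by
          linear_combination (1/4 : ℝ) * hs2
        exact_mod_cast congrArg (Complex.ofReal) h0
      have := h _ ((hroot _).2 hr)
      simp only [Complex.ofReal_re] at this
      linarith
    · set s := Real.sqrt (4 * D - T ^ 2) with hs
      have hs2 : s ^ 2 = 4 * D - T ^ 2 := Real.sq_sqrt (by linarith)
      have hsnn : 0 ≤ s := Real.sqrt_nonneg _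
      clear_value s
      have hr : (((T / 2 : ℝ) : ℂ) + ((s / 2 : ℝ) : ℂ) * Complex.I) ^ 2
          - (T : ℂ) * (((T / 2 : ℝ) : ℂ) + ((s / 2 : ℝ) : ℂ) * Complex.I) + (D : ℂ) = 0 := by
        have hI : Complex.I ^ 2 = -1 := Complex.I_sq
        have h0 : (s : ℂ) ^ 2 = (4 : ℂ) * D - (T : ℂ) ^ 2 := by exact_mod_cast congrArg Complex.ofReal hs2
        push_cast
        linear_combination ((Complex.I ^ 2) / 4) * h0 + ((D : ℂ) - (T : ℂ) ^ 2 / 4) * hI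
      have := h _ ((hroot _).2 hr)
      simp only [Complex.add_re, Complex.ofReal_re, Complex.mul_re, Complex.I_re, Complex.I_im,
        Complex.ofReal_im, mul_zero, mul_one, zero_sub, zero_mul, sub_zero, neg_zero, add_zero,
        mul_zero, zero_add] at this
      linarith
  · intro hTneg μ hμ
    have hr := (hroot μ).1 hμ
    set u := μ.re with hu
    set v := μ.im with hv
    have hre : u ^ 2 - v ^ 2 - T * u + D = 0 := by
      have h' := congrArg Complex.re hr
      simp only [Complex.add_re, Complex.sub_re, Complex.mul_re, Complex.ofReal_re,
        Complex.ofReal_im, Complex.zero_re, pow_two, ← hu, ← hv, zero_mul, sub_zero] at h'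
      linarith [h']
    have him : 2 * u * v - T * v = 0 := by
      have h' := congrArg Complex.im hr
      simp only [Complex.add_im, Complex.sub_im, Complex.mul_im, Complex.ofReal_re,
        Complex.ofReal_im, Complex.zero_im, pow_two, ← hu, ← hv, zero_mul, add_zero,
        mul_zero] at h'
      linarith [h']
    rcases eq_or_ne v 0 with hv0 | hv0
    · rw [hv0] at hre
      by_contra hge
      push_neg at hge
      nlinarith
    · have hu2 : u = T / 2 := by
        have h2 : (2 * u - T) * v = 0 := by linarith [him]; 
        rcases mul_eq_zero.1 h2 with h' | h'
        · linarith
        · exact absurd h' hv0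
      rw [hu2]
      linarith
end

section
/- Let $a_1, a_2 > 0$, $m_2 > d_2 > 0$, $\lambda_2 = \frac{a_2 d_2}{m_2-d_2}$, and $y_M > 0$ with $\frac{a_2}{a_2+y_M}\lambda_2 > \frac{(1+a_1)^3}{4a_1}$. Then for all $x \in (0,1]$ and $y \in (0, y_M]$, $\frac{a_2}{a_2+y}(y - \lambda_2) + \frac{1+a_1}{a_1+x}(1-x)(a_1+x) - \frac{1+a_1}{a_1+x}y \le -\eta$ where $\eta = \frac{a_2}{a_2+y_M}\lambda_2 - \frac{(1+a_1)^3}{4a_1} > 0$. -/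
/-!
Split the left-hand side into three pieces. The predation terms cancel to a nonpositive quantity
because `a₂ / (a₂ + y) ≤ 1 ≤ (1 + a₁) / (a₁ + x)`. The prey growth term equals `(1 - x)(1 + a₁)`,
which is at most `1 + a₁ ≤ (1 + a₁)³ / (4 a₁)` by AM-GM. Finally `a₂ / (a₂ + y)` decreases in `y`,
so the death term `-a₂ λ₂ / (a₂ + y)` is at most its value at `y = y_M`.
-/

lemma div_add_mul_le_div_add_mul {a b x y : ℝ} (ha : 0 ≤ a) (hb : 0 < b) (hx : 0 ≤ x)
    (hx1 : x ≤ 1) (hy : 0 ≤ y) : a / (a + y) * y ≤ (1 + b) / (b + x) * y := by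
  have hle_one : a / (a + y) ≤ 1 := div_le_one_of_le₀ (by linarith) (by linarith)
  have hone_le : 1 ≤ (1 + b) / (b + x) := (one_le_div (by linarith)).mpr (by linarith)
  exact mul_le_mul_of_nonneg_right (hle_one.trans hone_le) hy

lemma div_add_mul_sub_mul_add_le {a x : ℝ} (ha : 0 < a) (hx : 0 ≤ x) :
    (1 + a) / (a + x) * ((1 - x) * (a + x)) ≤ (1 + a) ^ 3 / (4 * a) := by
  have hcancel : (1 + a) / (a + x) * ((1 - x) * (a + x)) = (1 - x) * (1 + a) := by
    field_simp
  have hamgm : 4 * a ≤ (1 + a) ^ 2 := by simpa using four_mul_le_sq_add 1 a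
  rw [hcancel, le_div_iff₀ (by positivity)]
  calc (1 - x) * (1 + a) * (4 * a) ≤ (1 + a) * (1 + a) ^ 2 := by
        gcongr; exact mul_le_of_le_one_left (by positivity) (by linarith)
    _ = (1 + a) ^ 3 := by ring

lemma div_add_mul_le_div_add_mul_of_le {a l y y' : ℝ} (ha : 0 ≤ a) (hl : 0 ≤ l)
    (hy : 0 < a + y) (hyy' : y ≤ y') : a / (a + y') * l ≤ a / (a + y) * l :=
  mul_le_mul_of_nonneg_right (div_le_div_of_nonneg_left ha hy (by linarith)) hl

theorem stmt_18_general (a1 a2 d2 m2 yM : ℝ) (ha1 : 0 < a1) (ha2 : 0 < a2)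
    (hd2 : 0 < d2) (hm2 : d2 < m2) :
    ∀ x y : ℝ, 0 < x → x ≤ 1 → 0 < y → y ≤ yM →
      a2 / (a2 + y) * (y - a2 * d2 / (m2 - d2)) +
        (1 + a1) / (a1 + x) * ((1 - x) * (a1 + x)) - (1 + a1) / (a1 + x) * y ≤
      -(a2 / (a2 + yM) * (a2 * d2 / (m2 - d2)) - (1 + a1) ^ 3 / (4 * a1)) := by
  intro x y hx hx1 hy hyyM
  have hlam : 0 ≤ a2 * d2 / (m2 - d2) := div_nonneg (by positivity) (by linarith)
  have hpred := div_add_mul_le_div_add_mul ha2.le ha1 hx.le hx1 hy.le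
  have hgrowth := div_add_mul_sub_mul_add_le ha1 hx.le
  have hdeath := div_add_mul_le_div_add_mul_of_le ha2.le hlam (by linarith) hyyM
  linarith [mul_sub (a2 / (a2 + y)) y (a2 * d2 / (m2 - d2))]

theorem stmt_18 (a1 a2 d2 m2 yM : ℝ) (ha1 : 0 < a1) (ha2 : 0 < a2)
    (hd2 : 0 < d2) (hm2 : d2 < m2) (hyM : 0 < yM)
    (hcond : (1 + a1) ^ 3 / (4 * a1) < a2 / (a2 + yM) * (a2 * d2 / (m2 - d2))) :
    ∀ x y : ℝ, 0 < x → x ≤ 1 → 0 < y → y ≤ yM →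
      a2 / (a2 + y) * (y - a2 * d2 / (m2 - d2)) +
        (1 + a1) / (a1 + x) * ((1 - x) * (a1 + x)) - (1 + a1) / (a1 + x) * y ≤
      -(a2 / (a2 + yM) * (a2 * d2 / (m2 - d2)) - (1 + a1) ^ 3 / (4 * a1)) :=
  stmt_18_general a1 a2 d2 m2 yM ha1 ha2 hd2 hm2
end
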